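/- Let n ≥ 11 and d = n − 2k for some positive integer k, with 4 ≤ d ≤ n−8. Then the number of maximal unrefinable partitions of T_n − d equals the number of partitions of 2(k+1) into distinct odd parts (with at least two parts). -/

import Mathlib

/-- The n-th triangular number. -/
def T (n : ℕ) : ℕ := n * (n + 1) / 2

/-- A partition of `N` into distinct parts, represented as a finite set of
positive integers with at least two elements summing to `N`. -/
def DistinctPartition (N : ℕ) (S : Finset ℕ) : Prop :=
  (∀ x ∈ S, 0 < x) ∧ 2 ≤ S.card ∧ S.sum id = N

/-- The missing parts: integers in `{1, …, λ_t}` not appearing in the partition. -/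
def Missing (S : Finset ℕ) : Finset ℕ := Finset.Icc 1 (S.sup id) \ S

/-- No part is the sum of two distinct missing parts. -/
def Unrefinable (S : Finset ℕ) : Prop :=
  ∀ a ∈ Missing S, ∀ b ∈ Missing S, a ≠ b → a + b ∉ S

def UnrefinablePartition (N : ℕ) (S : Finset ℕ) : Prop :=
  DistinctPartition N S ∧ Unrefinable S

/-- A maximal unrefinable partition: its largest part is maximal among the
largest parts of all unrefinable partitions of `N`. -/
def MaximalUnrefinable (N : ℕ) (S : Finset ℕ) : Prop :=
  UnrefinablePartition N S ∧
    ∀ S' : Finset ℕ, UnrefinablePartition N S' → S'.sup id ≤ S.sup id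

/-!
Put `h = n - 3`, so that `T n - d = T h + (2h + 1) + 2(k + 1)` and `2(k + 1) ≤ h + 1`.
If `L` is a part of an unrefinable partition and `2a < L`, then `a` or `L - a` is a part. Summing
over the pairs `{a, L - a}` with `a ≤ h` bounds the sum of the partition from below: this rules
out a largest part `L ≥ 2h + 3` outright and `L = 2h + 2` by parity. For `L = 2h + 1` the same
count shows that the partition consists of `L` and one number from each pair, the missing
numbers `a ≤ h` forming a set `B` with `∑_{a ∈ B} (L - 2a) = 2(k + 1)`; so `Λ = {L - 2a : a ∈ B}`
is a partition of `2(k + 1)` into distinct odd parts. The one exception is the staircase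
`{1, …, h + 1, 2h + 1}`; it takes the place of `Λ = {1, h}`, the only `Λ` for which the
construction from `B` yields a refinable partition.
-/

open Finset

theorem T_succ (m : ℕ) : T (m + 1) = T m + (m + 1) := by
  unfold T
  rw [show (m + 1) * (m + 1 + 1) = m * (m + 1) + (m + 1) * 2 by ring,
    Nat.add_mul_div_right _ _ two_pos]

theorem sum_Icc_one_id (m : ℕ) : ∑ x ∈ Icc 1 m, x = T m := by
  induction m with
  | zero => rfl
  | succ m ih => rw [sum_Icc_succ_top (by omega), ih, T_succ]

theorem two_le_card_of_mem_of_sum_ne {S : Finset ℕ} {p : ℕ} (hp : p ∈ S)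
    (hsum : ∑ x ∈ S, x ≠ p) : 2 ≤ #S := by
  by_contra hS
  have : S = {p} := eq_singleton_iff_unique_mem.2
    ⟨hp, fun x hx => card_le_one.1 (by omega) x hx p hp⟩
  simp [this] at hsum

theorem sup_id_eq_of_mem_of_le {S : Finset ℕ} {p : ℕ} (hp : p ∈ S) (hle : ∀ x ∈ S, x ≤ p) :
    S.sup id = p :=
  le_antisymm (Finset.sup_le hle) (le_sup (f := id) hp)

namespace DistinctPartition

variable {w : ℕ} {Λ : Finset ℕ}

theorem sum_eq (hΛ : DistinctPartition w Λ) : ∑ x ∈ Λ, x = w := hΛ.2.2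

theorem sum_le_of_subset (hΛ : DistinctPartition w Λ) {s : Finset ℕ} (hs : s ⊆ Λ) :
    ∑ x ∈ s, x ≤ w :=
  hΛ.sum_eq ▸ sum_le_sum_of_subset hs

theorem eq_of_subset_of_sum_eq (hΛ : DistinctPartition w Λ) {s : Finset ℕ} (hs : s ⊆ Λ)
    (hsum : ∑ x ∈ s, x = w) : s = Λ := by
  by_contra hne
  obtain ⟨i, hiΛ, his⟩ := exists_of_ssubset (ssubset_of_subset_of_ne hs hne)
  have := sum_lt_sum_of_subset (f := id) hs hiΛ his (hΛ.1 i hiΛ) (fun _ _ _ => Nat.zero_le _)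
  simp only [id, hΛ.sum_eq, hsum] at this
  exact lt_irrefl _ this

theorem add_le (hΛ : DistinctPartition w Λ) {a b : ℕ} (ha : a ∈ Λ) (hb : b ∈ Λ) (hab : a ≠ b) :
    a + b ≤ w := by
  simpa [sum_pair hab] using hΛ.sum_le_of_subset (insert_subset ha (singleton_subset_iff.2 hb))

theorem add_add_le (hΛ : DistinctPartition w Λ) {a b c : ℕ} (ha : a ∈ Λ) (hb : b ∈ Λ)
    (hc : c ∈ Λ) (hab : a ≠ b) (hac : a ≠ c) (hbc : b ≠ c) : a + b + c ≤ w := by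
  have := hΛ.sum_le_of_subset (insert_subset ha (insert_subset hb (singleton_subset_iff.2 hc)))
  rwa [sum_insert (by simp [hab, hac]), sum_pair hbc, ← add_assoc] at this

theorem add_one_le (hΛ : DistinctPartition w Λ) {a : ℕ} (ha : a ∈ Λ) : a + 1 ≤ w := by
  obtain ⟨b, hb, hba⟩ := exists_mem_ne hΛ.2.1 a
  have := hΛ.add_le ha hb hba.symm
  have := hΛ.1 b hb
  omega

theorem eq_pair (hΛ : DistinctPartition w Λ) {a b : ℕ} (ha : a ∈ Λ) (hb : b ∈ Λ) (hab : a ≠ b)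
    (hsum : a + b = w) : Λ = {a, b} :=
  (hΛ.eq_of_subset_of_sum_eq (insert_subset ha (singleton_subset_iff.2 hb))
    (by rw [sum_pair hab, hsum])).symm

end DistinctPartition

def OddDistinctPartition (w : ℕ) (Λ : Finset ℕ) : Prop :=
  DistinctPartition w Λ ∧ ∀ x ∈ Λ, Odd x

theorem Unrefinable.mem_or_sub_mem {S : Finset ℕ} (hS : Unrefinable S) {p a : ℕ} (hp : p ∈ S)
    (ha : 0 < a) (hap : 2 * a < p) : a ∈ S ∨ p - a ∈ S := by
  have hle : p ≤ S.sup id := le_sup (f := id) hp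
  by_contra! h
  refine hS a ?_ (p - a) ?_ (by omega) (by rwa [Nat.add_sub_cancel' (by omega)])
  · exact mem_sdiff.2 ⟨mem_Icc.2 ⟨ha, by omega⟩, h.1⟩
  · exact mem_sdiff.2 ⟨mem_Icc.2 ⟨by omega, by omega⟩, h.2⟩

theorem unrefinable_of_Icc_subset {S : Finset ℕ} {m : ℕ} (hS : Icc 1 m ⊆ S)
    (hsup : S.sup id ≤ 2 * m + 2) : Unrefinable S := by
  intro a ha b hb hab habS
  have hle : a + b ≤ S.sup id := le_sup (f := id) habS
  simp only [Missing, mem_sdiff, mem_Icc] at ha hb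
  have ha' : m < a := by by_contra; exact ha.2 (hS (mem_Icc.2 ⟨ha.1.1, by omega⟩))
  have hb' : m < b := by by_contra; exact hb.2 (hS (mem_Icc.2 ⟨hb.1.1, by omega⟩))
  omega

/-- Besides `L`, this contains exactly one of `a` and `L - a` for each `a ∈ Icc 1 h` (when
`B ⊆ Icc 1 h` and `2h < L`): `L - a` if `a ∈ B`, and `a` otherwise. -/
def pairedSet (L h : ℕ) (B : Finset ℕ) : Finset ℕ :=
  insert L ((Icc 1 h \ B) ∪ B.image (L - ·))

section pairedSet

variable {L h : ℕ} {B : Finset ℕ}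

theorem notMem_pairedSet_iff_of_le (hB : B ⊆ Icc 1 h) (hhL : 2 * h < L) {x : ℕ} (hx : 1 ≤ x)
    (hxh : x ≤ h) : x ∉ pairedSet L h B ↔ x ∈ B := by
  refine Iff.not_left ?_
  simp only [pairedSet, mem_insert, mem_union, mem_sdiff, mem_Icc, mem_image]
  constructor
  · rintro (rfl | ⟨-, hxB⟩ | ⟨a, ha, rfl⟩)
    · omega
    · exact hxB
    · have := mem_Icc.1 (hB ha); omega
  · exact fun hxB => Or.inr (Or.inl ⟨⟨hx, hxh⟩, hxB⟩)

theorem mem_pairedSet_iff_of_lt {x : ℕ} (hhx : h < x) (hxL : x < L) :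
    x ∈ pairedSet L h B ↔ L - x ∈ B := by
  simp only [pairedSet, mem_insert, mem_union, mem_sdiff, mem_Icc, mem_image]
  constructor
  · rintro (rfl | ⟨⟨-, hxh⟩, -⟩ | ⟨a, ha, rfl⟩)
    · omega
    · omega
    · rwa [Nat.sub_sub_self (by omega)]
  · exact fun hxB => Or.inr (Or.inr ⟨L - x, hxB, by omega⟩)

theorem pos_and_le_of_mem_pairedSet (hB : B ⊆ Icc 1 h) (hhL : h < L) {x : ℕ}
    (hx : x ∈ pairedSet L h B) : 0 < x ∧ x ≤ L := by
  simp only [pairedSet, mem_insert, mem_union, mem_sdiff, mem_Icc, mem_image] at hx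
  rcases hx with rfl | ⟨⟨hx1, hxh⟩, -⟩ | ⟨a, ha, rfl⟩
  · omega
  · omega
  · have := mem_Icc.1 (hB ha); omega

theorem sup_pairedSet (hB : B ⊆ Icc 1 h) (hhL : h < L) : (pairedSet L h B).sup id = L :=
  sup_id_eq_of_mem_of_le (mem_insert_self _ _)
    fun _ hx => (pos_and_le_of_mem_pairedSet hB hhL hx).2

theorem sum_pairedSet_add_two_mul_sum (hB : B ⊆ Icc 1 h) (hhL : 2 * h < L) :
    ∑ x ∈ pairedSet L h B, x + 2 * ∑ a ∈ B, a = L + T h + #B * L := by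
  have hbound : ∀ a ∈ B, 1 ≤ a ∧ a ≤ h := fun a ha => mem_Icc.1 (hB ha)
  have hL : L ∉ (Icc 1 h \ B) ∪ B.image (L - ·) := by
    simp only [mem_union, mem_sdiff, mem_Icc, mem_image, not_or, not_exists, not_and]
    exact ⟨fun h' => by omega, fun a ha => by have := hbound a ha; omega⟩
  have hdisj : Disjoint (Icc 1 h \ B) (B.image (L - ·)) := by
    simp only [disjoint_left, mem_sdiff, mem_Icc, mem_image, not_exists, not_and]
    intro x hx a ha
    have := hbound a ha
    omega
  have hinj : Set.InjOn (L - ·) B := fun a ha b hb hab => by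
    have := hbound a ha; have := hbound b hb; simp only at hab; omega
  have hcompl : ∑ x ∈ Icc 1 h \ B, x + ∑ a ∈ B, a = T h := by
    rw [sum_sdiff hB, sum_Icc_one_id]
  have hpairs : ∑ a ∈ B, (L - a) + ∑ a ∈ B, a = #B * L := by
    rw [← sum_add_distrib, sum_congr rfl fun a ha => Nat.sub_add_cancel (by
      have := hbound a ha; omega), sum_const, smul_eq_mul]
  rw [pairedSet, sum_insert hL, sum_union hdisj, sum_image hinj]
  omega

theorem Icc_sdiff_pairedSet (hB : B ⊆ Icc 1 h) (hhL : 2 * h < L) :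
    Icc 1 h \ pairedSet L h B = B := by
  ext x
  rw [mem_sdiff]
  constructor
  · rintro ⟨hx, hxP⟩
    have := mem_Icc.1 hx
    exact (notMem_pairedSet_iff_of_le hB hhL this.1 this.2).1 hxP
  · intro hxB
    have := mem_Icc.1 (hB hxB)
    exact ⟨hB hxB, (notMem_pairedSet_iff_of_le hB hhL this.1 this.2).2 hxB⟩

theorem Unrefinable.pairedSet_subset {S : Finset ℕ} (hS : Unrefinable S) {p : ℕ} (hp : p ∈ S)
    (hhp : 2 * h < p) : pairedSet p h (Icc 1 h \ S) ⊆ S := by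
  intro x hx
  simp only [pairedSet, mem_insert, mem_union, mem_sdiff, mem_image, not_and, not_not] at hx
  rcases hx with rfl | ⟨hx, hxS⟩ | ⟨a, ⟨ha, haS⟩, rfl⟩
  · exact hp
  · exact hxS hx
  · have := mem_Icc.1 ha
    exact (hS.mem_or_sub_mem hp (by omega) (by omega)).resolve_left haS

theorem lt_of_mem_sdiff_pairedSet {S : Finset ℕ} {x : ℕ}
    (hx : x ∈ S \ pairedSet L h (Icc 1 h \ S)) (hpos : 0 < x) : h < x := by
  rw [mem_sdiff] at hx
  by_contra hxh
  exact hx.2 (mem_insert_of_mem (mem_union_left _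
    (mem_sdiff.2 ⟨mem_Icc.2 ⟨hpos, by omega⟩, fun h' => (mem_sdiff.1 h').2 hx.1⟩)))

theorem Unrefinable.sum_add_two_mul_sum_missing {S : Finset ℕ} (hS : Unrefinable S) {p : ℕ}
    (hp : p ∈ S) (hhp : 2 * h < p) :
    ∑ x ∈ S, x + 2 * ∑ a ∈ Icc 1 h \ S, a =
      p + T h + #(Icc 1 h \ S) * p + ∑ x ∈ S \ pairedSet p h (Icc 1 h \ S), x := by
  rw [← sum_sdiff (hS.pairedSet_subset hp hhp)]
  have := sum_pairedSet_add_two_mul_sum (sdiff_subset (s := Icc 1 h) (t := S)) hhp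
  omega

theorem unrefinable_pairedSet (hB : B ⊆ Icc 1 h) (hlarge : ∀ a ∈ B, ∀ c ∈ B, h < a + c)
    (htriple : ∀ a ∈ B, ∀ b ∈ B, ∀ c ∈ B, a ≠ b → a + b + c ≠ 2 * h + 1) :
    Unrefinable (pairedSet (2 * h + 1) h B) := by
  have hbound : ∀ a ∈ B, 1 ≤ a ∧ a ≤ h := fun a ha => mem_Icc.1 (hB ha)
  have hL : 2 * h + 1 ∈ pairedSet (2 * h + 1) h B := mem_insert_self _ _
  have mixed : ∀ a b, a ∈ B → h < b → b < 2 * h + 1 → 2 * h + 1 - b ∉ B →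
      a + b ∉ pairedSet (2 * h + 1) h B := by
    intro a b ha hb hbL hbB habP
    have := hbound a ha
    have hab : a + b < 2 * h + 1 := by
      refine lt_of_le_of_ne (pos_and_le_of_mem_pairedSet hB (by omega) habP).2 fun h' => hbB ?_
      rwa [show 2 * h + 1 - b = a by omega]
    have := hlarge a ha _ ((mem_pairedSet_iff_of_lt (by omega) hab).1 habP)
    omega
  intro m₁ hm₁ m₂ hm₂ hne hP
  rw [Missing, sup_pairedSet hB (by omega), mem_sdiff, mem_Icc] at hm₁ hm₂
  have hle := (pos_and_le_of_mem_pairedSet hB (by omega) hP).2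
  have hm₁L : m₁ ≠ 2 * h + 1 := fun h' => hm₁.2 (h' ▸ hL)
  have hm₂L : m₂ ≠ 2 * h + 1 := fun h' => hm₂.2 (h' ▸ hL)
  rcases le_or_gt m₁ h with h₁ | h₁ <;> rcases le_or_gt m₂ h with h₂ | h₂
  · have hB₁ := (notMem_pairedSet_iff_of_le hB (by omega) hm₁.1.1 h₁).1 hm₁.2
    have hB₂ := (notMem_pairedSet_iff_of_le hB (by omega) hm₂.1.1 h₂).1 hm₂.2
    have := hlarge _ hB₁ _ hB₂
    refine htriple _ hB₁ _ hB₂ _ ((mem_pairedSet_iff_of_lt this (by omega)).1 hP) hne ?_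
    omega
  · exact mixed m₁ m₂ ((notMem_pairedSet_iff_of_le hB (by omega) hm₁.1.1 h₁).1 hm₁.2) h₂
      (by omega) ((mem_pairedSet_iff_of_lt h₂ (by omega)).not.1 hm₂.2) hP
  · exact mixed m₂ m₁ ((notMem_pairedSet_iff_of_le hB (by omega) hm₂.1.1 h₂).1 hm₂.2) h₁
      (by omega) ((mem_pairedSet_iff_of_lt h₁ (by omega)).not.1 hm₁.2) (add_comm m₁ m₂ ▸ hP)
  · omega

end pairedSet

theorem two_mul_sum_add_card_le {B : Finset ℕ} {p : ℕ} (hB : ∀ a ∈ B, 2 * a < p) :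
    2 * ∑ a ∈ B, a + #B ≤ #B * p :=
  calc 2 * ∑ a ∈ B, a + #B = ∑ a ∈ B, (2 * a + 1) := by
        rw [sum_add_distrib, mul_sum, card_eq_sum_ones]
    _ ≤ ∑ _a ∈ B, p := sum_le_sum fun a ha => hB a ha
    _ = #B * p := by rw [sum_const, smul_eq_mul]

theorem UnrefinablePartition.sup_le {h k : ℕ} (hkh : 2 * k + 1 ≤ h) {S : Finset ℕ}
    (hS : UnrefinablePartition (T h + (2 * h + 1) + 2 * (k + 1)) S) : S.sup id ≤ 2 * h + 1 := by
  obtain ⟨⟨hpos, hcard, hsum⟩, hunref⟩ := hS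
  change ∑ x ∈ S, x = _ at hsum
  obtain ⟨p, hp, hsup⟩ := exists_mem_eq_sup S (card_pos.1 (by omega)) id
  rw [hsup, id_eq]
  by_contra! hlt
  rcases (show p = 2 * h + 2 ∨ 2 * h + 3 ≤ p by omega) with rfl | hp3
  · have key := hunref.sum_add_two_mul_sum_missing hp (h := h) (by omega)
    have hB := two_mul_sum_add_card_le (B := Icc 1 h \ S) (p := 2 * h + 2) fun a ha => by
      have := mem_Icc.1 (mem_sdiff.1 ha).1; omega
    rw [show #(Icc 1 h \ S) * (2 * h + 2) = 2 * (#(Icc 1 h \ S) * (h + 1)) by ring] at key hB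
    set R := S \ pairedSet (2 * h + 2) h (Icc 1 h \ S)
    -- the parts in `R` have odd sum, so there is one, and it exceeds `h`
    obtain ⟨x, hx⟩ : R.Nonempty := by
      rw [nonempty_iff_ne_empty]
      intro hR
      rw [hR, sum_empty] at key
      omega
    have : x ≤ ∑ y ∈ R, y := single_le_sum (f := fun y => y) (fun _ _ => Nat.zero_le _) hx
    have := lt_of_mem_sdiff_pairedSet hx (hpos x (mem_sdiff.1 hx).1)
    omega
  · have key := hunref.sum_add_two_mul_sum_missing hp (h := h + 1) (by omega)
    have hB := two_mul_sum_add_card_le (B := Icc 1 (h + 1) \ S) (p := p) fun a ha => by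
      have := mem_Icc.1 (mem_sdiff.1 ha).1; omega
    rw [T_succ] at key
    omega

section OddParts

variable {h : ℕ}

theorem sum_image_odd_add_two_mul_sum {B : Finset ℕ} (hB : ∀ a ∈ B, a ≤ h) :
    ∑ l ∈ B.image (fun a => 2 * h + 1 - 2 * a), l + 2 * ∑ a ∈ B, a = #B * (2 * h + 1) := by
  rw [sum_image fun a ha b hb hab => by have := hB a ha; have := hB b hb; omega,
    mul_sum, ← sum_add_distrib,
    sum_congr rfl fun a ha => show 2 * h + 1 - 2 * a + 2 * a = 2 * h + 1 by have := hB a ha; omega,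
    sum_const, smul_eq_mul]

theorem card_image_odd {B : Finset ℕ} (hB : ∀ a ∈ B, a ≤ h) :
    #(B.image fun a => 2 * h + 1 - 2 * a) = #B :=
  card_image_of_injOn fun a ha b hb hab => by
    have := hB a ha; have := hB b hb; omega

theorem image_half_image_odd {B : Finset ℕ} (hB : ∀ a ∈ B, a ≤ h) :
    (B.image fun a => 2 * h + 1 - 2 * a).image (fun l => h - l / 2) = B := by
  rw [image_image]
  conv_rhs => rw [← image_id (s := B)]
  exact image_congr fun a ha => by have := hB a ha; simp only [Function.comp_apply, id]; omega

theorem image_odd_image_half {Λ : Finset ℕ} (hΛ : ∀ l ∈ Λ, Odd l ∧ l ≤ 2 * h + 1) :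
    (Λ.image fun l => h - l / 2).image (fun a => 2 * h + 1 - 2 * a) = Λ := by
  rw [image_image]
  conv_rhs => rw [← image_id (s := Λ)]
  refine image_congr fun l hl => ?_
  obtain ⟨⟨m, rfl⟩, hle⟩ := hΛ l hl
  simp only [Function.comp_apply, id]
  omega

end OddParts

namespace OddDistinctPartition

variable {w h : ℕ} {Λ : Finset ℕ}

theorem image_half_subset (hΛ : OddDistinctPartition w Λ) (hwh : w ≤ h + 1) :
    Λ.image (fun l => h - l / 2) ⊆ Icc 1 h := by
  intro a ha
  obtain ⟨l, hl, rfl⟩ := mem_image.1 ha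
  have := hΛ.1.add_one_le hl
  obtain ⟨m, rfl⟩ := hΛ.2 l hl
  exact mem_Icc.2 ⟨by omega, by omega⟩

theorem lt_add_of_mem_image_half (hΛ : OddDistinctPartition w Λ) (hwh : w ≤ h + 1) :
    ∀ a ∈ Λ.image (fun l => h - l / 2), ∀ c ∈ Λ.image (fun l => h - l / 2), h < a + c := by
  simp only [mem_image]
  rintro _ ⟨l, hl, rfl⟩ _ ⟨l', hl', rfl⟩
  have := hΛ.1.add_one_le hl
  have := hΛ.1.add_one_le hl'
  obtain ⟨m, rfl⟩ := hΛ.2 l hl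
  obtain ⟨m', rfl⟩ := hΛ.2 l' hl'
  omega

/-- A relation `a + b + c = 2h + 1` among the missing parts `h - l / 2` means
`l_a + l_b + l_c = 2h + 1` among parts of `Λ`, which `w ≤ h + 1` only allows for `Λ = {1, h}`. -/
theorem add_add_ne_of_mem_image_half (hΛ : OddDistinctPartition w Λ) (hwh : w ≤ h + 1)
    (hne : Λ ≠ {1, h}) :
    ∀ a ∈ Λ.image (fun l => h - l / 2), ∀ b ∈ Λ.image (fun l => h - l / 2),
      ∀ c ∈ Λ.image (fun l => h - l / 2), a ≠ b → a + b + c ≠ 2 * h + 1 := by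
  simp only [mem_image]
  rintro _ ⟨la, ha, rfl⟩ _ ⟨lb, hb, rfl⟩ _ ⟨lc, hc, rfl⟩ hab habc
  have hab' : la ≠ lb := by rintro rfl; exact hab rfl
  have := hΛ.1.add_one_le ha
  have := hΛ.1.add_one_le hb
  have := hΛ.1.add_le ha hb hab'
  obtain ⟨ma, rfl⟩ := hΛ.2 la ha
  obtain ⟨mb, rfl⟩ := hΛ.2 lb hb
  obtain ⟨mc, rfl⟩ := hΛ.2 lc hc
  by_cases hca : 2 * mc + 1 = 2 * ma + 1
  · exact hne (by rw [hΛ.1.eq_pair ha hb hab' (by omega), pair_comm]; congr <;> omega)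
  by_cases hcb : 2 * mc + 1 = 2 * mb + 1
  · exact hne (by rw [hΛ.1.eq_pair ha hb hab' (by omega)]; congr <;> omega)
  have := hΛ.1.add_add_le ha hb hc hab' (Ne.symm hca) (Ne.symm hcb)
  omega

end OddDistinctPartition

theorem oddDistinctPartition_pair {k : ℕ} (hk : 1 ≤ k) :
    OddDistinctPartition (2 * (k + 1)) {1, 2 * k + 1} := by
  refine ⟨⟨?_, by rw [card_pair (by omega)], by rw [sum_pair (by omega), id, id]; ring⟩, ?_⟩
  · simp
  · simp only [mem_insert, mem_singleton]
    rintro x (rfl | rfl)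
    exacts [odd_one, odd_two_mul_add_one k]

theorem oddDistinctPartition_image_odd {h k : ℕ} {B : Finset ℕ} (hB : ∀ a ∈ B, a ≤ h)
    (hsum : 2 * (k + 1) + 2 * ∑ a ∈ B, a = #B * (2 * h + 1)) :
    OddDistinctPartition (2 * (k + 1)) (B.image fun a => 2 * h + 1 - 2 * a) := by
  have himage := sum_image_odd_add_two_mul_sum hB
  refine ⟨⟨?_, ?_, by change ∑ l ∈ _, l = _; omega⟩, ?_⟩
  · simp only [mem_image]
    rintro _ ⟨a, ha, rfl⟩
    have := hB a ha
    omega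
  · rw [card_image_odd hB]
    by_contra! hcard
    interval_cases hB' : #B
    · simp only [zero_mul] at hsum
      omega
    · obtain ⟨a, rfl⟩ := card_eq_one.1 hB'
      simp only [sum_singleton, one_mul] at hsum
      omega
  · simp only [mem_image]
    rintro _ ⟨a, ha, rfl⟩
    exact ⟨h - a, by have := hB a ha; omega⟩

/-- The maximal unrefinable partition attached to an odd partition `Λ`. Generically the missing
parts up to `h` are the numbers `h - l / 2 = (2h + 1 - l) / 2` for `l ∈ Λ`; for `Λ = {1, h}` that
would make the missing parts `h` and `(h + 1) / 2` add up to the part `2h + 1 - (h + 1) / 2`, and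
the staircase `{1, …, h + 1, 2h + 1}` takes its place. -/
def maxPartition (h : ℕ) (Λ : Finset ℕ) : Finset ℕ :=
  if Λ = {1, h} then insert (2 * h + 1) (Icc 1 (h + 1))
  else pairedSet (2 * h + 1) h (Λ.image fun l => h - l / 2)

def oddPartsOf (h : ℕ) (S : Finset ℕ) : Finset ℕ :=
  if Icc 1 h ⊆ S then {1, h} else (Icc 1 h \ S).image fun a => 2 * h + 1 - 2 * a

theorem sup_staircase (h : ℕ) : (insert (2 * h + 1) (Icc 1 (h + 1))).sup id = 2 * h + 1 :=
  sup_id_eq_of_mem_of_le (mem_insert_self _ _) fun x hx => by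
    rcases mem_insert.1 hx with rfl | hx
    · rfl
    · have := mem_Icc.1 hx; omega

theorem unrefinablePartition_staircase {h : ℕ} (hh : 0 < h) :
    UnrefinablePartition (T h + (2 * h + 1) + (h + 1)) (insert (2 * h + 1) (Icc 1 (h + 1))) := by
  have hsum : ∑ x ∈ insert (2 * h + 1) (Icc 1 (h + 1)), x = T h + (2 * h + 1) + (h + 1) := by
    rw [sum_insert (by simp; omega), sum_Icc_one_id, T_succ]
    ring
  refine ⟨⟨?_, two_le_card_of_mem_of_sum_ne (mem_insert_self _ _) (by omega), hsum⟩, ?_⟩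
  · intro x hx
    rcases mem_insert.1 hx with rfl | hx
    · omega
    · exact (mem_Icc.1 hx).1
  · exact unrefinable_of_Icc_subset (subset_insert _ _) (by rw [sup_staircase]; omega)

section MaxPartition

variable {h k : ℕ} {Λ : Finset ℕ}

theorem maxPartition_spec (hkh : 2 * k + 1 ≤ h) (hΛ : OddDistinctPartition (2 * (k + 1)) Λ) :
    (maxPartition h Λ).sup id = 2 * h + 1 ∧
      UnrefinablePartition (T h + (2 * h + 1) + 2 * (k + 1)) (maxPartition h Λ) := by
  by_cases hex : Λ = {1, h}
  · have h1 : 1 ≠ h := by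
      rintro rfl
      simpa [hex] using hΛ.1.2.1
    have hw : h + 1 = 2 * (k + 1) := by
      have := hΛ.1.sum_eq
      rw [hex, sum_pair h1] at this
      omega
    rw [maxPartition, if_pos hex, ← hw]
    exact ⟨sup_staircase h, unrefinablePartition_staircase (by omega)⟩
  rw [maxPartition, if_neg hex]
  set B := Λ.image fun l => h - l / 2
  have hB : B ⊆ Icc 1 h := hΛ.image_half_subset (by omega)
  have hΛB : B.image (fun a => 2 * h + 1 - 2 * a) = Λ := image_odd_image_half fun l hl =>
    ⟨hΛ.2 l hl, by have := hΛ.1.add_one_le hl; omega⟩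
  have hsumB := sum_image_odd_add_two_mul_sum (h := h) fun a ha => (mem_Icc.1 (hB ha)).2
  rw [hΛB, hΛ.1.sum_eq] at hsumB
  have hsum := sum_pairedSet_add_two_mul_sum hB (L := 2 * h + 1) (by omega)
  have hmem : 2 * h + 1 ∈ pairedSet (2 * h + 1) h B := mem_insert_self _ _
  refine ⟨sup_pairedSet hB (by omega),
    ⟨fun x hx => (pos_and_le_of_mem_pairedSet hB (by omega) hx).1,
      two_le_card_of_mem_of_sum_ne hmem (by omega), by change ∑ x ∈ _, x = _; omega⟩,
    unrefinable_pairedSet hB (hΛ.lt_add_of_mem_image_half (by omega))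
      (hΛ.add_add_ne_of_mem_image_half (by omega) hex)⟩

theorem oddPartsOf_maxPartition (hkh : 2 * k + 1 ≤ h) (hΛ : OddDistinctPartition (2 * (k + 1)) Λ) :
    oddPartsOf h (maxPartition h Λ) = Λ := by
  by_cases hex : Λ = {1, h}
  · rw [maxPartition, if_pos hex, oddPartsOf, if_pos (Icc_subset_Icc_right (by omega)
      |>.trans (subset_insert _ _)), hex]
  set B := Λ.image fun l => h - l / 2
  have hB : B ⊆ Icc 1 h := hΛ.image_half_subset (by omega)
  have hcompl : Icc 1 h \ pairedSet (2 * h + 1) h B = B := Icc_sdiff_pairedSet hB (by omega)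
  have hBne : B.Nonempty := (card_pos.1 (by have := hΛ.1.2.1; omega)).image _
  rw [maxPartition, if_neg hex, oddPartsOf, if_neg fun hsub => by
    rw [sdiff_eq_empty_iff_subset.2 hsub] at hcompl
    exact hBne.ne_empty hcompl.symm, hcompl]
  exact image_odd_image_half fun l hl => ⟨hΛ.2 l hl, by have := hΛ.1.add_one_le hl; omega⟩

end MaxPartition

theorem maxPartition_image_odd {h : ℕ} {B : Finset ℕ} (hh : 2 ≤ h) (hB : B ⊆ Icc 1 h)
    (hS : Unrefinable (pairedSet (2 * h + 1) h B)) :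
    maxPartition h (B.image fun a => 2 * h + 1 - 2 * a) = pairedSet (2 * h + 1) h B := by
  rw [maxPartition, if_neg, image_half_image_odd fun a ha => (mem_Icc.1 (hB ha)).2]
  intro hex
  -- the parts `1` and `h` of `{1, h}` come from the missing parts `h` and `(h + 1) / 2`
  obtain ⟨a, ha, ha1⟩ := mem_image.1 (hex ▸ mem_insert_self 1 {h})
  obtain ⟨b, hb, hbh⟩ := mem_image.1 (hex ▸ mem_insert_of_mem (mem_singleton_self h))
  have hmissing : ∀ c ∈ B, c ∈ Missing (pairedSet (2 * h + 1) h B) := fun c hc => by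
    have := mem_Icc.1 (hB hc)
    rw [Missing, sup_pairedSet hB (by omega), mem_sdiff]
    exact ⟨mem_Icc.2 ⟨this.1, by omega⟩,
      (notMem_pairedSet_iff_of_le hB (by omega) this.1 this.2).2 hc⟩
  have := mem_Icc.1 (hB ha)
  have := mem_Icc.1 (hB hb)
  refine hS a (hmissing a ha) b (hmissing b hb) (by omega) ?_
  rw [mem_pairedSet_iff_of_lt (by omega) (by omega)]
  convert hb using 1
  omega

theorem UnrefinablePartition.eq_pairedSet_or_eq_staircase {h k : ℕ} (hkh : 2 * k + 1 ≤ h)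
    {S : Finset ℕ} (hS : UnrefinablePartition (T h + (2 * h + 1) + 2 * (k + 1)) S)
    (hsup : S.sup id = 2 * h + 1) :
    (S = pairedSet (2 * h + 1) h (Icc 1 h \ S) ∧
        2 * (k + 1) + 2 * ∑ a ∈ Icc 1 h \ S, a = #(Icc 1 h \ S) * (2 * h + 1)) ∨
      (h + 1 = 2 * (k + 1) ∧ S = insert (2 * h + 1) (Icc 1 (h + 1))) := by
  obtain ⟨⟨hpos, hcard, hsum⟩, hunref⟩ := hS
  change ∑ x ∈ S, x = _ at hsum
  have hL : 2 * h + 1 ∈ S := by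
    obtain ⟨p, hp, hp'⟩ := exists_mem_eq_sup S (card_pos.1 (by omega)) id
    rwa [← hsup, hp']
  have key := hunref.sum_add_two_mul_sum_missing hL (h := h) (by omega)
  have hsub := hunref.pairedSet_subset hL (h := h) (by omega)
  set B := Icc 1 h \ S
  set R := S \ pairedSet (2 * h + 1) h B
  have hB := two_mul_sum_add_card_le (B := B) (p := 2 * h + 1) fun a ha => by
    have := mem_Icc.1 (mem_sdiff.1 ha).1; omega
  rcases R.eq_empty_or_nonempty with hR | ⟨x, hx⟩
  · rw [hR, sum_empty] at key
    exact Or.inl ⟨(sdiff_eq_empty_iff_subset.1 hR).antisymm hsub, by omega⟩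
  -- a part outside `pairedSet` exceeds `h`, which leaves no room for missing parts up to `h`
  have hRle : ∀ y ∈ R, y ≤ ∑ z ∈ R, z := fun y hy =>
    single_le_sum (f := fun z => z) (fun _ _ => Nat.zero_le _) hy
  have hRgt : ∀ y ∈ R, h < y := fun y hy => lt_of_mem_sdiff_pairedSet hy (hpos y (mem_sdiff.1 hy).1)
  have := hRle x hx
  have := hRgt x hx
  have hB0 : B = ∅ := card_eq_zero.1 (by omega)
  have hR : R = {h + 1} := eq_singleton_iff_unique_mem.2
    ⟨(show x = h + 1 by omega) ▸ hx, fun y hy => by have := hRle y hy; have := hRgt y hy; omega⟩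
  refine Or.inr ⟨by omega, ?_⟩
  calc S = R ∪ pairedSet (2 * h + 1) h B := (sdiff_union_of_subset hsub).symm
    _ = insert (2 * h + 1) (Icc 1 (h + 1)) := by
      rw [hR, hB0]
      ext y
      simp only [pairedSet, sdiff_empty, image_empty, union_empty, mem_union, mem_singleton,
        mem_insert, mem_Icc]
      omega

theorem UnrefinablePartition.exists_maxPartition_eq {h k : ℕ} (hk : 1 ≤ k)
    (hkh : 2 * k + 1 ≤ h) {S : Finset ℕ}
    (hS : UnrefinablePartition (T h + (2 * h + 1) + 2 * (k + 1)) S)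
    (hsup : S.sup id = 2 * h + 1) :
    ∃ Λ, OddDistinctPartition (2 * (k + 1)) Λ ∧ maxPartition h Λ = S := by
  rcases hS.eq_pairedSet_or_eq_staircase hkh hsup with ⟨hSP, hsum⟩ | ⟨hw, hS'⟩
  · refine ⟨_, oddDistinctPartition_image_odd
      (fun a ha => (mem_Icc.1 (mem_sdiff.1 ha).1).2) hsum, ?_⟩
    rw [maxPartition_image_odd (by omega) sdiff_subset (hSP ▸ hS.2), ← hSP]
  · refine ⟨{1, h}, ?_, by rw [maxPartition, if_pos rfl, hS']⟩
    obtain rfl : h = 2 * k + 1 := by omega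
    exact oddDistinctPartition_pair hk

theorem ncard_maximalUnrefinable {h k : ℕ} (hk : 1 ≤ k) (hkh : 2 * k + 1 ≤ h) :
    {S | MaximalUnrefinable (T h + (2 * h + 1) + 2 * (k + 1)) S}.ncard =
      {Λ | OddDistinctPartition (2 * (k + 1)) Λ}.ncard := by
  have himage : {S | MaximalUnrefinable (T h + (2 * h + 1) + 2 * (k + 1)) S} =
      maxPartition h '' {Λ | OddDistinctPartition (2 * (k + 1)) Λ} := by
    ext S
    constructor
    · rintro ⟨hS, hmax⟩
      have hsup : S.sup id = 2 * h + 1 := (hS.sup_le hkh).antisymm <|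
        (maxPartition_spec hkh (oddDistinctPartition_pair hk)).1 ▸
          hmax _ (maxPartition_spec hkh (oddDistinctPartition_pair hk)).2
      exact hS.exists_maxPartition_eq hk hkh hsup
    · rintro ⟨Λ, hΛ, rfl⟩
      obtain ⟨hsup, hU⟩ := maxPartition_spec hkh hΛ
      exact ⟨hU, fun S' hS' => hsup ▸ hS'.sup_le hkh⟩
  have hinj : Set.InjOn (maxPartition h) {Λ | OddDistinctPartition (2 * (k + 1)) Λ} :=
    Set.LeftInvOn.injOn (f₁' := oddPartsOf h) fun Λ hΛ => oddPartsOf_maxPartition hkh hΛ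
  rw [himage, hinj.ncard_image]

theorem count_d_even_distance_general (n d k : ℕ) (hk : 1 ≤ k)
    (hdk : d = n - 2 * k) (hd1 : 4 ≤ d) :
    {S : Finset ℕ | MaximalUnrefinable (T n - d) S}.ncard =
      {S : Finset ℕ | DistinctPartition (2 * (k + 1)) S ∧ ∀ x ∈ S, Odd x}.ncard := by
  obtain ⟨h, rfl⟩ : ∃ h, n = h + 3 := ⟨n - 3, by omega⟩
  have hN : T (h + 3) - d = T h + (2 * h + 1) + 2 * (k + 1) := by
    rw [T_succ, T_succ, T_succ]
    omega
  rw [hN]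
  exact ncard_maximalUnrefinable hk (by omega)

theorem count_d_even_distance (n d k : ℕ) (hn : 11 ≤ n) (hk : 1 ≤ k)
    (hdk : d = n - 2 * k) (hd1 : 4 ≤ d) (hd2 : d ≤ n - 8) :
    {S : Finset ℕ | MaximalUnrefinable (T n - d) S}.ncard =
      {S : Finset ℕ | DistinctPartition (2 * (k + 1)) S ∧ ∀ x ∈ S, Odd x}.ncard :=
  count_d_even_distance_general n d k hk hdk hd1
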